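/- Every LTLEBR+P formula defines a safety language: for every LTLEBR+P formula χ, the ω-language L(χ) is a safety language. -/

import Mathlib

/-- Syntax of LTL with Past (LTL+P) over proposition letters of type `α`. -/
inductive Formula (α : Type) : Type
  | atom  : α → Formula α                       -- proposition letter
  | not   : Formula α → Formula α               -- ¬
  | or    : Formula α → Formula α → Formula α   -- ∨
  | and   : Formula α → Formula α → Formula α   -- ∧
  | next  : Formula α → Formula α               -- X
  | untl  : Formula α → Formula α → Formula α   -- U
  | rels  : Formula α → Formula α → Formula α   -- R
  | ev    : Formula α → Formula α               -- F
  | glob  : Formula α → Formula α               -- G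
  | yest  : Formula α → Formula α               -- Y
  | wyest : Formula α → Formula α               -- Z
  | since : Formula α → Formula α → Formula α   -- S
  | trig  : Formula α → Formula α → Formula α   -- T
  | once  : Formula α → Formula α               -- O
  | hist  : Formula α → Formula α               -- H

namespace Formula

/-- Satisfaction `σ, i ⊨ φ` of an LTL+P formula by a state sequence
(an infinite word `σ : ℕ → Set α`) at position `i`. -/
def Sat {α : Type} (σ : ℕ → Set α) : Formula α → ℕ → Prop
  | .atom p, i => p ∈ σ i
  | .not φ, i => ¬ Sat σ φ i
  | .or φ ψ, i => Sat σ φ i ∨ Sat σ ψ i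
  | .and φ ψ, i => Sat σ φ i ∧ Sat σ ψ i
  | .next φ, i => Sat σ φ (i + 1)
  | .untl φ ψ, i => ∃ j, i ≤ j ∧ Sat σ ψ j ∧ ∀ k, i ≤ k → k < j → Sat σ φ k
  | .rels φ ψ, i => (∀ j, i ≤ j → Sat σ ψ j) ∨
      (∃ n, i ≤ n ∧ Sat σ φ n ∧ ∀ m, i ≤ m → m ≤ n → Sat σ ψ m)
  | .ev φ, i => ∃ j, i ≤ j ∧ Sat σ φ j
  | .glob φ, i => ∀ j, i ≤ j → Sat σ φ j
  | .yest φ, i => 0 < i ∧ Sat σ φ (i - 1)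
  | .wyest φ, i => i = 0 ∨ Sat σ φ (i - 1)
  | .since φ ψ, i => ∃ j, j ≤ i ∧ Sat σ ψ j ∧ ∀ k, j < k → k ≤ i → Sat σ φ k
  | .trig φ ψ, i => (∀ j, j ≤ i → Sat σ ψ j) ∨
      (∃ n, n ≤ i ∧ Sat σ φ n ∧ ∀ m, n ≤ m → m ≤ i → Sat σ ψ m)
  | .once φ, i => ∃ j, j ≤ i ∧ Sat σ φ j
  | .hist φ, i => ∀ j, j ≤ i → Sat σ φ j

/-- The ω-language of a formula: the set of state sequences satisfying it at position 0. -/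
def Lang {α : Type} (φ : Formula α) : Set (ℕ → Set α) := {σ | Sat σ φ 0}

end Formula

open Formula

/-- `σ_{[0,i]} · σ'` : the infinite word whose first `i+1` letters come from `σ`
and which then continues as `σ'`. -/
def extendPrefix {α : Type} (σ : ℕ → Set α) (i : ℕ) (σ' : ℕ → Set α) : ℕ → Set α :=
  fun n => if n ≤ i then σ n else σ' (n - (i + 1))

/-- `L` is a safety ω-language: every word not in `L` has a finite prefix all of whose
infinite extensions are not in `L`. -/
def IsSafety {α : Type} (L : Set (ℕ → Set α)) : Prop :=
  ∀ σ : ℕ → Set α, σ ∉ L → ∃ i : ℕ, ∀ σ' : ℕ → Set α, extendPrefix σ i σ' ∉ L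

/-- `X^n φ`. -/
def nextPow {α : Type} : ℕ → Formula α → Formula α
  | 0, φ => φ
  | n + 1, φ => .next (nextPow n φ)

/-- `⋀_{j=0}^{n} X^j φ`. -/
def nextChain {α : Type} (φ : Formula α) : ℕ → Formula α
  | 0 => φ
  | n + 1 => .and (nextChain φ n) (nextPow (n + 1) φ)

/-- The `i`-th disjunct of the bounded until: `X^i ψ₂ ∧ ⋀_{j=0}^{i-1} X^j ψ₁`. -/
def buntilTerm {α : Type} (ψ₁ ψ₂ : Formula α) : ℕ → Formula α
  | 0 => ψ₂
  | n + 1 => .and (nextPow (n + 1) ψ₂) (nextChain ψ₁ n)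

/-- Bounded until `ψ₁ U^[a,b] ψ₂ = ⋁_{i=a}^{b} (X^i ψ₂ ∧ ⋀_{j=0}^{i-1} X^j ψ₁)`. -/
def buntil {α : Type} (a b : ℕ) (ψ₁ ψ₂ : Formula α) : Formula α :=
  ((List.range' (a + 1) (b - a)).map (buntilTerm ψ₁ ψ₂)).foldl .or (buntilTerm ψ₁ ψ₂ a)

/-- Pure past layer of LTLEBR+P : `η ::= p | ¬η | η∨η | Yη | ηSη`. -/
inductive PurePastL {α : Type} : Formula α → Prop
  | atom (p : α) : PurePastL (.atom p)
  | not {φ} : PurePastL φ → PurePastL (.not φ)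
  | or {φ ψ} : PurePastL φ → PurePastL ψ → PurePastL (.or φ ψ)
  | yest {φ} : PurePastL φ → PurePastL (.yest φ)
  | since {φ ψ} : PurePastL φ → PurePastL ψ → PurePastL (.since φ ψ)

/-- Bounded future layer over a base: `ψ ::= base | ¬ψ | ψ∨ψ | Xψ | ψ U^[a,b] ψ`. -/
inductive BFLayer {α : Type} (base : Formula α → Prop) : Formula α → Prop
  | base {φ} : base φ → BFLayer base φ
  | not {φ} : BFLayer base φ → BFLayer base (.not φ)
  | or {φ ψ} : BFLayer base φ → BFLayer base ψ → BFLayer base (.or φ ψ)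
  | next {φ} : BFLayer base φ → BFLayer base (.next φ)
  | bu (a b : ℕ) {φ ψ} : BFLayer base φ → BFLayer base ψ → BFLayer base (buntil a b φ ψ)

/-- Future layer: `φ ::= ψ | φ∧φ | Xφ | Gφ | ψRφ`. -/
inductive FLayer {α : Type} (base : Formula α → Prop) : Formula α → Prop
  | bf {φ} : BFLayer base φ → FLayer base φ
  | and {φ ψ} : FLayer base φ → FLayer base ψ → FLayer base (.and φ ψ)
  | next {φ} : FLayer base φ → FLayer base (.next φ)
  | glob {φ} : FLayer base φ → FLayer base (.glob φ)
  | rels {φ ψ} : BFLayer base φ → FLayer base ψ → FLayer base (.rels φ ψ)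

/-- Boolean layer: `χ ::= φ | χ∨χ | χ∧χ`. -/
inductive BLayer {α : Type} (base : Formula α → Prop) : Formula α → Prop
  | f {φ} : FLayer base φ → BLayer base φ
  | or {φ ψ} : BLayer base φ → BLayer base ψ → BLayer base (.or φ ψ)
  | and {φ ψ} : BLayer base φ → BLayer base ψ → BLayer base (.and φ ψ)

/-- LTLEBR+P formulas: layered grammar whose innermost layer is the pure past layer. -/
def IsLTLEBRP {α : Type} (φ : Formula α) : Prop := BLayer PurePastL φ

/-- LTLEBR formulas: LTLEBR+P without the pure past layer
(the bounded future layer starts from proposition letters). -/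
def IsLTLEBR {α : Type} (φ : Formula α) : Prop :=
  BLayer (fun ψ => ∃ p, ψ = Formula.atom p) φ

/-- Formulas with no past operators (pure future LTL). -/
def FutureOnly {α : Type} : Formula α → Prop
  | .atom _ => True
  | .not φ => FutureOnly φ
  | .or φ ψ => FutureOnly φ ∧ FutureOnly ψ
  | .and φ ψ => FutureOnly φ ∧ FutureOnly ψ
  | .next φ => FutureOnly φ
  | .untl φ ψ => FutureOnly φ ∧ FutureOnly ψ
  | .rels φ ψ => FutureOnly φ ∧ FutureOnly ψ
  | .ev φ => FutureOnly φ
  | .glob φ => FutureOnly φ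
  | .yest _ => False
  | .wyest _ => False
  | .since _ _ => False
  | .trig _ _ => False
  | .once _ => False
  | .hist _ => False

/-- Negated normal form: `nnf b φ` is the NNF of `φ` if `b = false`, of `¬φ` if `b = true`. -/
def nnf {α : Type} : Bool → Formula α → Formula α
  | false, .atom p => .atom p
  | true, .atom p => .not (.atom p)
  | b, .not φ => nnf (!b) φ
  | false, .or φ ψ => .or (nnf false φ) (nnf false ψ)
  | true, .or φ ψ => .and (nnf true φ) (nnf true ψ)
  | false, .and φ ψ => .and (nnf false φ) (nnf false ψ)
  | true, .and φ ψ => .or (nnf true φ) (nnf true ψ)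
  | b, .next φ => .next (nnf b φ)
  | false, .untl φ ψ => .untl (nnf false φ) (nnf false ψ)
  | true, .untl φ ψ => .rels (nnf true φ) (nnf true ψ)
  | false, .rels φ ψ => .rels (nnf false φ) (nnf false ψ)
  | true, .rels φ ψ => .untl (nnf true φ) (nnf true ψ)
  | false, .ev φ => .ev (nnf false φ)
  | true, .ev φ => .glob (nnf true φ)
  | false, .glob φ => .glob (nnf false φ)
  | true, .glob φ => .ev (nnf true φ)
  | false, .yest φ => .yest (nnf false φ)
  | true, .yest φ => .wyest (nnf true φ)
  | false, .wyest φ => .wyest (nnf false φ)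
  | true, .wyest φ => .yest (nnf true φ)
  | false, .since φ ψ => .since (nnf false φ) (nnf false ψ)
  | true, .since φ ψ => .trig (nnf true φ) (nnf true ψ)
  | false, .trig φ ψ => .trig (nnf false φ) (nnf false ψ)
  | true, .trig φ ψ => .since (nnf true φ) (nnf true ψ)
  | false, .once φ => .once (nnf false φ)
  | true, .once φ => .hist (nnf true φ)
  | false, .hist φ => .hist (nnf false φ)
  | true, .hist φ => .once (nnf true φ)

/-- The formula contains no until (`U`) and no eventually (`F`) operator. -/
def NoUF {α : Type} : Formula α → Prop
  | .atom _ => True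
  | .not φ => NoUF φ
  | .or φ ψ => NoUF φ ∧ NoUF ψ
  | .and φ ψ => NoUF φ ∧ NoUF ψ
  | .next φ => NoUF φ
  | .untl _ _ => False
  | .rels φ ψ => NoUF φ ∧ NoUF ψ
  | .ev _ => False
  | .glob φ => NoUF φ
  | .yest φ => NoUF φ
  | .wyest φ => NoUF φ
  | .since φ ψ => NoUF φ ∧ NoUF ψ
  | .trig φ ψ => NoUF φ ∧ NoUF ψ
  | .once φ => NoUF φ
  | .hist φ => NoUF φ

/-- safetyLTL: pure-future LTL formulas whose negated normal form
contains no `U` and no `F`. -/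
def IsSafetyLTL {α : Type} (φ : Formula α) : Prop :=
  FutureOnly φ ∧ NoUF (nnf false φ)

/-- LTLBP (bounded past LTL): Boolean combinations of proposition letters
and yesterday operators. -/
inductive IsLTLBP {α : Type} : Formula α → Prop
  | atom (p : α) : IsLTLBP (.atom p)
  | not {φ} : IsLTLBP φ → IsLTLBP (.not φ)
  | or {φ ψ} : IsLTLBP φ → IsLTLBP ψ → IsLTLBP (.or φ ψ)
  | and {φ ψ} : IsLTLBP φ → IsLTLBP ψ → IsLTLBP (.and φ ψ)
  | yest {φ} : IsLTLBP φ → IsLTLBP (.yest φ)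

/-- Temporal depth `D` of an LTLBP formula. -/
def depth {α : Type} : Formula α → ℕ
  | .not φ => depth φ
  | .or φ ψ => max (depth φ) (depth ψ)
  | .and φ ψ => max (depth φ) (depth ψ)
  | .yest φ => depth φ + 1
  | _ => 0

/-- canLTLEBR: the canonical form of LTLEBR, i.e. `∧/∨`-combinations of formulas
`X^n α`, `X^n G α`, `X^n (α R β)` with `α, β` LTLBP formulas. -/
inductive IsCanLTLEBR {α : Type} : Formula α → Prop
  | bp {φ} (n : ℕ) : IsLTLBP φ → IsCanLTLEBR (nextPow n φ)
  | glob {φ} (n : ℕ) : IsLTLBP φ → IsCanLTLEBR (nextPow n (.glob φ))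
  | rels {φ ψ} (n : ℕ) : IsLTLBP φ → IsLTLBP ψ → IsCanLTLEBR (nextPow n (.rels φ ψ))
  | and {φ ψ} : IsCanLTLEBR φ → IsCanLTLEBR ψ → IsCanLTLEBR (.and φ ψ)
  | or {φ ψ} : IsCanLTLEBR φ → IsCanLTLEBR ψ → IsCanLTLEBR (.or φ ψ)

/-- Maximum number of nested next (`X`) operators (for canonical-form formulas). -/
def nextDepth {α : Type} : Formula α → ℕ
  | .next φ => nextDepth φ + 1
  | .not φ => nextDepth φ
  | .or φ ψ => max (nextDepth φ) (nextDepth ψ)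
  | .and φ ψ => max (nextDepth φ) (nextDepth ψ)
  | .glob φ => nextDepth φ
  | .rels φ ψ => max (nextDepth φ) (nextDepth ψ)
  | .yest φ => nextDepth φ
  | _ => 0

/-- Maximum temporal depth among LTLBP subformulas (for canonical-form formulas). -/
def bpDepth {α : Type} : Formula α → ℕ
  | .next φ => bpDepth φ
  | .glob φ => depth φ
  | .rels φ ψ => max (depth φ) (depth ψ)
  | .and φ ψ => max (bpDepth φ) (bpDepth ψ)
  | .or φ ψ => max (bpDepth φ) (bpDepth ψ)
  | φ => depth φ

/-- The interval `σ_{[n-d, n]}` of `σ`, as a finite word: it starts at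
`max (n-d) 0` and ends at `n`. -/
def window {α : Type} (σ : ℕ → Set α) (d n : ℕ) : List (Set α) :=
  (List.range (min d n + 1)).map (fun t => σ (n - min d n + t))

/-- A pure past formula: all of its temporal operators are past operators. -/
def IsPurePast {α : Type} : Formula α → Prop
  | .atom _ => True
  | .not φ => IsPurePast φ
  | .or φ ψ => IsPurePast φ ∧ IsPurePast ψ
  | .and φ ψ => IsPurePast φ ∧ IsPurePast ψ
  | .next _ => False
  | .untl _ _ => False
  | .rels _ _ => False
  | .ev _ => False
  | .glob _ => False
  | .yest φ => IsPurePast φ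
  | .wyest φ => IsPurePast φ
  | .since φ ψ => IsPurePast φ ∧ IsPurePast ψ
  | .trig φ ψ => IsPurePast φ ∧ IsPurePast ψ
  | .once φ => IsPurePast φ
  | .hist φ => IsPurePast φ

/-- The two-letter alphabet Σ = {p₁, p₂}. -/
inductive PP : Type
  | p1 : PP
  | p2 : PP
deriving DecidableEq

/-- The state sequence `^{i,k}σ^j`: its `h`-th state is `{p₁}` if `h ∈ {i,k}`,
`{p₂}` if `h = j`, and `{p₁,p₂}` otherwise. -/
def sig (i k j : ℕ) : ℕ → Set PP := fun h =>
  if h = i ∨ h = k then {PP.p1} else if h = j then {PP.p2} else {PP.p1, PP.p2}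

/-- The formula `G (p₁ ∨ G p₂)`. -/
def phiG : Formula PP :=
  .glob (.or (.atom PP.p1) (.glob (.atom PP.p2)))

/-! Pure past formulas are determined by the prefix read so far, and the bounded future layer
looks only a bounded number of steps ahead. Hence when a formula of the future layer fails, the
failure is witnessed at a finite position: for `G φ` at the first failing position of `φ`, and for
`ψ R φ` at the first failure `j` of `φ`, together with the failures of `ψ` on `[i, j)`. Conjunctions
need one witness and disjunctions the longer of two, so a violated LTLEBR+P formula has a finite
prefix every extension of which violates it. -/

namespace Formula

variable {α : Type}

def AgreeUpTo (m : ℕ) (σ σ' : ℕ → Set α) : Prop := ∀ n ≤ m, σ n = σ' n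

lemma AgreeUpTo.mono {m m' : ℕ} {σ σ' : ℕ → Set α} (h : AgreeUpTo m σ σ') (hm : m' ≤ m) :
    AgreeUpTo m' σ σ' :=
  fun n hn => h n (hn.trans hm)

lemma agreeUpTo_extendPrefix (σ σ' : ℕ → Set α) (i : ℕ) :
    AgreeUpTo i σ (extendPrefix σ i σ') :=
  fun n hn => by simp [extendPrefix, hn]

def HasLookahead (φ : Formula α) (d : ℕ) : Prop :=
  ∀ σ σ' i, AgreeUpTo (i + d) σ σ' → (Sat σ φ i ↔ Sat σ' φ i)

def FinitelyRefutable (φ : Formula α) : Prop :=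
  ∀ σ i, ¬ Sat σ φ i → ∃ m, ∀ σ', AgreeUpTo m σ σ' → ¬ Sat σ' φ i

lemma not_sat_rels_iff {σ : ℕ → Set α} {φ ψ : Formula α} {i : ℕ} :
    ¬ Sat σ (.rels φ ψ) i ↔ ∃ j, i ≤ j ∧ ¬ Sat σ ψ j ∧ ∀ n, i ≤ n → n < j → ¬ Sat σ φ n := by
  classical
  constructor
  · intro hrels
    simp only [Sat, not_or, not_forall, not_exists, not_and] at hrels
    obtain ⟨hfail, hno_release⟩ := hrels
    have hex : ∃ j, i ≤ j ∧ ¬ Sat σ ψ j := by simpa using hfail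
    obtain ⟨hij, hψj⟩ := Nat.find_spec hex
    refine ⟨Nat.find hex, hij, hψj, fun n hin hnj hφn => ?_⟩
    obtain ⟨m, him, hmn, hψm⟩ := hno_release n hin hφn
    exact Nat.find_min hex (lt_of_le_of_lt hmn hnj) ⟨him, hψm⟩
  · rintro ⟨j, hij, hψj, hφ⟩ (hall | ⟨n, hin, hφn, hψ⟩)
    · exact hψj (hall j hij)
    · rcases lt_or_ge n j with hnj | hjn
      · exact hφ n hin hnj hφn
      · exact hψj (hψ j hij hjn)

namespace HasLookahead

variable {φ ψ : Formula α} {d : ℕ}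

lemma mono {d' : ℕ} (h : HasLookahead φ d) (hd : d ≤ d') : HasLookahead φ d' :=
  fun σ σ' i hag => h σ σ' i (hag.mono (by omega))

lemma not (h : HasLookahead φ d) : HasLookahead (.not φ) d :=
  fun σ σ' i hag => not_congr (h σ σ' i hag)

lemma or (h₁ : HasLookahead φ d) (h₂ : HasLookahead ψ d) : HasLookahead (.or φ ψ) d :=
  fun σ σ' i hag => or_congr (h₁ σ σ' i hag) (h₂ σ σ' i hag)

lemma and (h₁ : HasLookahead φ d) (h₂ : HasLookahead ψ d) : HasLookahead (.and φ ψ) d :=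
  fun σ σ' i hag => and_congr (h₁ σ σ' i hag) (h₂ σ σ' i hag)

lemma next (h : HasLookahead φ d) : HasLookahead (.next φ) (d + 1) :=
  fun σ σ' i hag => h σ σ' (i + 1) (hag.mono (by omega))

lemma nextPow (h : HasLookahead φ d) (n : ℕ) : HasLookahead (nextPow n φ) (d + n) := by
  induction n with
  | zero => exact h
  | succ n ih => exact ih.next

lemma nextChain (h : HasLookahead φ d) (n : ℕ) : HasLookahead (nextChain φ n) (d + n) := by
  induction n with
  | zero => exact h
  | succ n ih => exact (ih.mono (by omega)).and (h.nextPow (n + 1))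

lemma buntilTerm (h₁ : HasLookahead φ d) (h₂ : HasLookahead ψ d) (n : ℕ) :
    HasLookahead (buntilTerm φ ψ n) (d + n) := by
  cases n with
  | zero => exact h₂
  | succ n => exact (h₂.nextPow (n + 1)).and ((h₁.nextChain n).mono (by omega))

lemma foldl_or {l : List (Formula α)} (hφ : HasLookahead φ d)
    (hl : ∀ ψ ∈ l, HasLookahead ψ d) : HasLookahead (l.foldl .or φ) d := by
  induction l generalizing φ with
  | nil => exact hφ
  | cons ψ l ih =>
    exact ih (hφ.or (hl ψ List.mem_cons_self)) (fun χ hχ => hl χ (List.mem_cons_of_mem _ hχ))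

lemma buntil (h₁ : HasLookahead φ d) (h₂ : HasLookahead ψ d) (a b : ℕ) :
    HasLookahead (buntil a b φ ψ) (d + max a b) := by
  refine foldl_or ((h₁.buntilTerm h₂ a).mono (by omega)) fun χ hχ => ?_
  obtain ⟨n, hn, rfl⟩ := List.mem_map.mp hχ
  have : n ≤ b := by rw [List.mem_range'_1] at hn; omega
  exact (h₁.buntilTerm h₂ n).mono (by omega)

lemma finitelyRefutable (h : HasLookahead φ d) : FinitelyRefutable φ :=
  fun σ i hφ => ⟨i + d, fun σ' hag hφ' => hφ ((h σ σ' i hag).2 hφ')⟩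

end HasLookahead

namespace FinitelyRefutable

variable {φ ψ : Formula α}

lemma and (h₁ : FinitelyRefutable φ) (h₂ : FinitelyRefutable ψ) :
    FinitelyRefutable (.and φ ψ) := by
  intro σ i hφψ
  rcases not_and_or.mp hφψ with hφ | hψ
  · obtain ⟨m, hm⟩ := h₁ σ i hφ
    exact ⟨m, fun σ' hag hφψ' => hm σ' hag hφψ'.1⟩
  · obtain ⟨m, hm⟩ := h₂ σ i hψ
    exact ⟨m, fun σ' hag hφψ' => hm σ' hag hφψ'.2⟩

lemma or (h₁ : FinitelyRefutable φ) (h₂ : FinitelyRefutable ψ) :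
    FinitelyRefutable (.or φ ψ) := by
  intro σ i hφψ
  obtain ⟨hφ, hψ⟩ := not_or.mp hφψ
  obtain ⟨m₁, hm₁⟩ := h₁ σ i hφ
  obtain ⟨m₂, hm₂⟩ := h₂ σ i hψ
  refine ⟨max m₁ m₂, fun σ' hag hφψ' => ?_⟩
  rcases hφψ' with hφ' | hψ'
  · exact hm₁ σ' (hag.mono (le_max_left _ _)) hφ'
  · exact hm₂ σ' (hag.mono (le_max_right _ _)) hψ'

lemma next (h : FinitelyRefutable φ) : FinitelyRefutable (.next φ) :=
  fun σ i hφ => h σ (i + 1) hφ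

lemma glob (h : FinitelyRefutable φ) : FinitelyRefutable (.glob φ) := by
  intro σ i hGφ
  obtain ⟨j, hij, hφj⟩ : ∃ j, i ≤ j ∧ ¬ Sat σ φ j := by simpa [Sat] using hGφ
  obtain ⟨m, hm⟩ := h σ j hφj
  exact ⟨m, fun σ' hag hGφ' => hm σ' hag (hGφ' j hij)⟩

lemma rels {d : ℕ} (hφ : HasLookahead φ d) (hψ : FinitelyRefutable ψ) :
    FinitelyRefutable (.rels φ ψ) := by
  intro σ i hrels
  obtain ⟨j, hij, hψj, hφ_before⟩ := not_sat_rels_iff.mp hrels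
  obtain ⟨m, hm⟩ := hψ σ j hψj
  refine ⟨max m (j + d), fun σ' hag => not_sat_rels_iff.mpr ⟨j, hij, ?_, fun n hin hnj => ?_⟩⟩
  · exact hm σ' (hag.mono (le_max_left _ _))
  · rw [← hφ σ σ' n (hag.mono (by omega))]
    exact hφ_before n hin hnj

lemma isSafety_lang (h : FinitelyRefutable φ) : IsSafety (Lang φ) := by
  intro σ hσ
  obtain ⟨m, hm⟩ := h σ 0 hσ
  exact ⟨m, fun σ' => hm _ (agreeUpTo_extendPrefix σ σ' m)⟩

end FinitelyRefutable

end Formula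

lemma PurePastL.hasLookahead_zero {α : Type} {η : Formula α} (h : PurePastL η) :
    HasLookahead η 0 := by
  induction h with
  | atom p => exact fun σ σ' i hag => by simp only [Sat, hag i le_rfl]
  | not _ ih => exact ih.not
  | or _ _ ih₁ ih₂ => exact ih₁.or ih₂
  | yest _ ih =>
    intro σ σ' i hag
    exact and_congr_right fun _ => ih σ σ' (i - 1) (hag.mono (by omega))
  | since _ _ ih₁ ih₂ =>
    intro σ σ' i hag
    simp only [Sat]
    refine exists_congr fun j => and_congr_right fun hji => and_congr
      (ih₂ σ σ' j (hag.mono (by omega))) ?_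
    exact forall_congr' fun k => imp_congr_right fun _ => imp_congr_right fun hki =>
      ih₁ σ σ' k (hag.mono (by omega))

section Layers

variable {α : Type} {base : Formula α → Prop}

lemma BFLayer.exists_hasLookahead (hbase : ∀ η, base η → ∃ d, HasLookahead η d)
    {φ : Formula α} (h : BFLayer base φ) : ∃ d, HasLookahead φ d := by
  induction h with
  | base hη => exact hbase _ hη
  | not _ ih =>
    obtain ⟨d, hd⟩ := ih
    exact ⟨d, hd.not⟩
  | or _ _ ih₁ ih₂ =>
    obtain ⟨d₁, hd₁⟩ := ih₁
    obtain ⟨d₂, hd₂⟩ := ih₂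
    exact ⟨max d₁ d₂, (hd₁.mono (le_max_left _ _)).or (hd₂.mono (le_max_right _ _))⟩
  | next _ ih =>
    obtain ⟨d, hd⟩ := ih
    exact ⟨d + 1, hd.next⟩
  | bu a b _ _ ih₁ ih₂ =>
    obtain ⟨d₁, hd₁⟩ := ih₁
    obtain ⟨d₂, hd₂⟩ := ih₂
    exact ⟨_, (hd₁.mono (le_max_left _ _)).buntil (hd₂.mono (le_max_right _ _)) a b⟩

lemma FLayer.finitelyRefutable (hbase : ∀ η, base η → ∃ d, HasLookahead η d)
    {φ : Formula α} (h : FLayer base φ) : FinitelyRefutable φ := by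
  induction h with
  | bf hψ =>
    obtain ⟨d, hd⟩ := hψ.exists_hasLookahead hbase
    exact hd.finitelyRefutable
  | and _ _ ih₁ ih₂ => exact ih₁.and ih₂
  | next _ ih => exact ih.next
  | glob _ ih => exact ih.glob
  | rels hψ _ ih =>
    obtain ⟨d, hd⟩ := hψ.exists_hasLookahead hbase
    exact FinitelyRefutable.rels hd ih

lemma BLayer.finitelyRefutable (hbase : ∀ η, base η → ∃ d, HasLookahead η d)
    {φ : Formula α} (h : BLayer base φ) : FinitelyRefutable φ := by
  induction h with
  | f hφ => exact hφ.finitelyRefutable hbase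
  | or _ _ ih₁ ih₂ => exact ih₁.or ih₂
  | and _ _ ih₁ ih₂ => exact ih₁.and ih₂

end Layers

theorem ltlebrp_defines_safety_general {α : Type}
    (χ : Formula α) (h : IsLTLEBRP χ) : IsSafety (Lang χ) :=
  (h.finitelyRefutable fun _ hη => ⟨0, hη.hasLookahead_zero⟩).isSafety_lang

/-- every LTLEBR+P formula defines a safety language. -/
theorem ltlebrp_defines_safety {α : Type} [Fintype α]
    (χ : Formula α) (h : IsLTLEBRP χ) : IsSafety (Lang χ) :=
  ltlebrp_defines_safety_general χ h
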